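/- arXiv:2206.00297 — 2 statements merged into one kernel-verified Lean document; each statement's English description precedes it below -/
import Mathlib

section
/- Let φ: ℝ → ℝ be continuous and piecewise continuously differentiable, meaning there exist finitely many points y₁ < ... < y_k such that φ is continuously differentiable on each of the closed intervals (-∞, y₁], [y_{j-1}, y_j] for j = 2,...,k, and [y_k, ∞) (with one-sided derivatives at the breakpoints). Let (φₙ) be the mollifications φₙ = ρₙ * φ with standard mollifiers ρₙ supported in (-εₙ, εₙ), εₙ → 0⁺. If yₙ → ȳ in ℝ, then limsup_{n→∞} φₙ'(yₙ) ≤ max{φ₋'(ȳ), φ₊'(ȳ)} and liminf_{n→∞} φₙ'(yₙ) ≥ min{φ₋'(ȳ), φ₊'(ȳ)}, where φ₋'(ȳ) and φ₊'(ȳ) denote the left and right derivatives of φ at ȳ. -/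
open MeasureTheory Filter Topology
open scoped Convolution

/-- Local mean-value estimate for a `C¹` function on a closed interval. -/
lemma lemA {φ : ℝ → ℝ} {a b c : ℝ} (hab : a < b) (hc : c ∈ Set.Icc a b)
    (hφ : ContDiffOn ℝ 1 φ (Set.Icc a b)) {δ : ℝ} (hδ : 0 < δ) :
    ∃ r > 0, ∀ u ∈ Set.Icc a b, ∀ v ∈ Set.Icc a b, |u - c| ≤ r → |v - c| ≤ r →
      |φ v - φ u - derivWithin φ (Set.Icc a b) c * (v - u)| ≤ δ * |v - u| := by
  have hud : UniqueDiffOn ℝ (Set.Icc a b) := uniqueDiffOn_Icc hab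
  have hdiff : DifferentiableOn ℝ φ (Set.Icc a b) := hφ.differentiableOn one_ne_zero
  set f' := derivWithin φ (Set.Icc a b) with hf'
  have hcont : ContinuousOn f' (Set.Icc a b) := hφ.continuousOn_derivWithin hud le_rfl
  set L := f' c with hLdef
  have hcw : ContinuousWithinAt f' (Set.Icc a b) c := hcont c hc
  have hev : ∀ᶠ x in 𝓝[Set.Icc a b] c, dist (f' x) L < δ :=
    hcw (Metric.ball_mem_nhds L hδ)
  obtain ⟨ε, hε, hball⟩ := Metric.mem_nhdsWithin_iff.mp hev
  refine ⟨ε / 2, by positivity, ?_⟩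
  intro u hu v hv hur hvr
  set s' := Set.Icc a b ∩ Metric.ball c ε with hs'
  have hconv : Convex ℝ s' := (convex_Icc a b).inter (convex_ball c ε)
  have hmem : ∀ x, x ∈ Set.Icc a b → |x - c| ≤ ε / 2 → x ∈ s' := by
    intro x hx hxr
    refine ⟨hx, ?_⟩
    rw [Metric.mem_ball, Real.dist_eq]
    linarith [abs_nonneg (x - c)]
  have hu' : u ∈ s' := hmem u hu hur
  have hv' : v ∈ s' := hmem v hv hvr
  have hder : ∀ x ∈ s', HasDerivWithinAt (fun y => φ y - L * y) (f' x - L) s' x := by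
    intro x hx
    have h1 : HasDerivWithinAt φ (f' x) s' x :=
      ((hdiff x hx.1).hasDerivWithinAt).mono Set.inter_subset_left
    have h2 : HasDerivWithinAt (fun y : ℝ => L * y) L s' x := by
      simpa using ((hasDerivAt_id x).const_mul L).hasDerivWithinAt (s := s')
    exact h1.fun_sub h2
  have hbound : ∀ x ∈ s', ‖f' x - L‖ ≤ δ := by
    intro x hx
    have h3 : dist (f' x) L < δ := hball ⟨hx.2, hx.1⟩
    rw [Real.dist_eq] at h3
    rw [Real.norm_eq_abs]
    linarith
  have := hconv.norm_image_sub_le_of_norm_hasDerivWithin_le hder hbound hu' hv'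
  rw [Real.norm_eq_abs, Real.norm_eq_abs] at this
  calc |φ v - φ u - L * (v - u)| = |(φ v - L * v) - (φ u - L * u)| := by ring_nf
    _ ≤ δ * |v - u| := this

/-- There is a closed interval to the left of any point on which `φ` is `C¹`. -/
lemma lemB_left {φ : ℝ → ℝ} {k : ℕ} {ys : Fin (k + 1) → ℝ}
    (h_left : ContDiffOn ℝ 1 φ (Set.Iic (ys 0)))
    (h_right : ContDiffOn ℝ 1 φ (Set.Ici (ys (Fin.last k))))
    (h_mid : ∀ j : Fin k, ContDiffOn ℝ 1 φ (Set.Icc (ys j.castSucc) (ys j.succ)))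
    (ybar : ℝ) : ∃ a, a < ybar ∧ ContDiffOn ℝ 1 φ (Set.Icc a ybar) := by
  by_cases h0 : ybar ≤ ys 0
  · exact ⟨ybar - 1, by linarith,
      h_left.mono (fun x hx => le_trans hx.2 h0)⟩
  push_neg at h0
  by_cases hl : ys (Fin.last k) < ybar
  · refine ⟨max (ys (Fin.last k)) (ybar - 1), max_lt hl (by linarith), h_right.mono ?_⟩
    intro x hx; exact le_trans (le_max_left _ _) hx.1
  push_neg at hl
  set S : Finset (Fin (k + 1)) := Finset.univ.filter (fun i => ys i < ybar) with hS
  have hS0 : (0 : Fin (k+1)) ∈ S := by simp [hS, h0]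
  have hSne : S.Nonempty := ⟨0, hS0⟩
  set j₀ := S.max' hSne with hj₀def
  have hj₀ : ys j₀ < ybar := by
    have := S.max'_mem hSne
    simpa [hS] using this
  have hjne : j₀ ≠ Fin.last k := by
    intro h; rw [h] at hj₀; exact absurd hl (not_le.mpr hj₀)
  have hjlt : (j₀ : ℕ) < k := by
    have h1 : (j₀ : ℕ) < k + 1 := j₀.isLt
    have h2 : (j₀ : ℕ) ≠ k := fun h => hjne (Fin.ext h)
    omega
  set j : Fin k := ⟨(j₀ : ℕ), hjlt⟩ with hjdef
  have hcs : j.castSucc = j₀ := Fin.ext rfl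
  have hsucc : ybar ≤ ys j.succ := by
    by_contra h
    push_neg at h
    have hmem : j.succ ∈ S := by simp [hS, h]
    have := S.le_max' _ hmem
    rw [← hj₀def] at this
    have : ((j.succ : Fin (k+1)) : ℕ) ≤ (j₀ : ℕ) := this
    simp [Fin.val_succ] at this
    exact lt_irrefl _ this
  refine ⟨max (ys j₀) (ybar - 1), max_lt hj₀ (by linarith), (h_mid j).mono ?_⟩
  intro x hx
  rw [hcs]
  exact ⟨le_trans (le_max_left _ _) hx.1, le_trans hx.2 hsucc⟩

/-- There is a closed interval to the right of any point on which `φ` is `C¹`. -/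
lemma lemB_right {φ : ℝ → ℝ} {k : ℕ} {ys : Fin (k + 1) → ℝ}
    (h_left : ContDiffOn ℝ 1 φ (Set.Iic (ys 0)))
    (h_right : ContDiffOn ℝ 1 φ (Set.Ici (ys (Fin.last k))))
    (h_mid : ∀ j : Fin k, ContDiffOn ℝ 1 φ (Set.Icc (ys j.castSucc) (ys j.succ)))
    (ybar : ℝ) : ∃ b, ybar < b ∧ ContDiffOn ℝ 1 φ (Set.Icc ybar b) := by
  by_cases h0 : ys (Fin.last k) ≤ ybar
  · exact ⟨ybar + 1, by linarith, h_right.mono (fun x hx => le_trans h0 hx.1)⟩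
  push_neg at h0
  by_cases hl : ybar < ys 0
  · refine ⟨min (ys 0) (ybar + 1), lt_min hl (by linarith), h_left.mono ?_⟩
    intro x hx; exact le_trans hx.2 (min_le_left _ _)
  push_neg at hl
  set S : Finset (Fin (k + 1)) := Finset.univ.filter (fun i => ybar < ys i) with hS
  have hS0 : Fin.last k ∈ S := by simp [hS, h0]
  have hSne : S.Nonempty := ⟨_, hS0⟩
  set j₀ := S.min' hSne with hj₀def
  have hj₀ : ybar < ys j₀ := by
    have := S.min'_mem hSne
    simpa [hS] using this
  have hjne : j₀ ≠ 0 := by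
    intro h; rw [h] at hj₀; exact absurd hl (not_le.mpr hj₀)
  have hjpos : 0 < (j₀ : ℕ) := by
    rcases Nat.eq_zero_or_pos (j₀ : ℕ) with h | h
    · exact absurd (Fin.ext h) hjne
    · exact h
  have hjlt : (j₀ : ℕ) - 1 < k := by
    have h1 : (j₀ : ℕ) < k + 1 := j₀.isLt
    omega
  set j : Fin k := ⟨(j₀ : ℕ) - 1, hjlt⟩ with hjdef
  have hsc : j.succ = j₀ := by
    apply Fin.ext
    show (j₀ : ℕ) - 1 + 1 = (j₀ : ℕ)
    omega
  have hcs : ys j.castSucc ≤ ybar := by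
    by_contra h
    push_neg at h
    have hmem : j.castSucc ∈ S := by simp [hS, h]
    have := S.min'_le _ hmem
    rw [← hj₀def] at this
    have : (j₀ : ℕ) ≤ ((j.castSucc : Fin (k+1)) : ℕ) := this
    change (j₀ : ℕ) ≤ (j₀ : ℕ) - 1 at this
    omega
  refine ⟨min (ys j₀) (ybar + 1), lt_min hj₀ (by linarith), (h_mid j).mono ?_⟩
  intro x hx
  rw [hsc]
  exact ⟨le_trans hcs hx.1, le_trans hx.2 (min_le_left _ _)⟩

/-- Two-sided increment estimate around a point in terms of one-sided derivatives. -/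
lemma lemC {φ : ℝ → ℝ} {a b ybar : ℝ} (ha : a < ybar) (hb : ybar < b)
    (hφa : ContDiffOn ℝ 1 φ (Set.Icc a ybar)) (hφb : ContDiffOn ℝ 1 φ (Set.Icc ybar b))
    {δ : ℝ} (hδ : 0 < δ) :
    ∃ r > 0, ∀ u v, ybar - r ≤ u → u ≤ v → v ≤ ybar + r →
      (min (derivWithin φ (Set.Iic ybar) ybar) (derivWithin φ (Set.Ici ybar) ybar) - δ) * (v - u)
        ≤ φ v - φ u ∧
      φ v - φ u ≤
      (max (derivWithin φ (Set.Iic ybar) ybar) (derivWithin φ (Set.Ici ybar) ybar) + δ) * (v - u) := by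
  set L := derivWithin φ (Set.Iic ybar) ybar with hL
  set R := derivWithin φ (Set.Ici ybar) ybar with hR
  set m := min L R with hm
  set M := max L R with hM
  have hLa : derivWithin φ (Set.Icc a ybar) ybar = L := by
    apply derivWithin_congr_set
    apply Filter.eventuallyEq_set.mpr
    filter_upwards [Ioi_mem_nhds ha] with x hx
    simp only [Set.mem_Icc, Set.mem_Iic]
    exact ⟨fun h => h.2, fun h => ⟨le_of_lt hx, h⟩⟩
  have hRb : derivWithin φ (Set.Icc ybar b) ybar = R := by
    apply derivWithin_congr_set
    apply Filter.eventuallyEq_set.mpr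
    filter_upwards [Iio_mem_nhds hb] with x hx
    simp only [Set.mem_Icc, Set.mem_Ici]
    exact ⟨fun h => h.1, fun h => ⟨h, le_of_lt hx⟩⟩
  obtain ⟨r₁, hr₁, hA₁⟩ := lemA ha (Set.mem_Icc.mpr ⟨le_of_lt ha, le_refl _⟩) hφa hδ
  obtain ⟨r₂, hr₂, hA₂⟩ := lemA hb (Set.mem_Icc.mpr ⟨le_refl _, le_of_lt hb⟩) hφb hδ
  rw [hLa] at hA₁
  rw [hRb] at hA₂
  refine ⟨min (min r₁ r₂) (min (ybar - a) (b - ybar)), by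
    have h1 : 0 < ybar - a := by linarith
    have h2 : 0 < b - ybar := by linarith
    positivity, ?_⟩
  set r := min (min r₁ r₂) (min (ybar - a) (b - ybar)) with hrdef
  have hrr₁ : r ≤ r₁ := le_trans (min_le_left _ _) (min_le_left _ _)
  have hrr₂ : r ≤ r₂ := le_trans (min_le_left _ _) (min_le_right _ _)
  have hra : r ≤ ybar - a := le_trans (min_le_right _ _) (min_le_left _ _)
  have hrb : r ≤ b - ybar := le_trans (min_le_right _ _) (min_le_right _ _)
  have hmL : m ≤ L := min_le_left _ _
  have hmR : m ≤ R := min_le_right _ _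
  have hLM : L ≤ M := le_max_left _ _
  have hRM : R ≤ M := le_max_right _ _
  have hleft : ∀ u v, ybar - r ≤ u → u ≤ v → v ≤ ybar →
      (m - δ) * (v - u) ≤ φ v - φ u ∧ φ v - φ u ≤ (M + δ) * (v - u) := by
    intro u v hu huv hv
    have hu' : u ∈ Set.Icc a ybar := ⟨by linarith, by linarith⟩
    have hv' : v ∈ Set.Icc a ybar := ⟨by linarith, hv⟩
    have h1 := hA₁ u hu' v hv' (by rw [abs_le]; constructor <;> linarith)
      (by rw [abs_le]; constructor <;> linarith)
    rw [abs_le, abs_of_nonneg (by linarith : (0:ℝ) ≤ v - u)] at h1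
    have h2 : m * (v - u) ≤ L * (v - u) := mul_le_mul_of_nonneg_right hmL (by linarith)
    have h3 : L * (v - u) ≤ M * (v - u) := mul_le_mul_of_nonneg_right hLM (by linarith)
    constructor <;> nlinarith
  have hright : ∀ u v, ybar ≤ u → u ≤ v → v ≤ ybar + r →
      (m - δ) * (v - u) ≤ φ v - φ u ∧ φ v - φ u ≤ (M + δ) * (v - u) := by
    intro u v hu huv hv
    have hu' : u ∈ Set.Icc ybar b := ⟨hu, by linarith⟩
    have hv' : v ∈ Set.Icc ybar b := ⟨by linarith, by linarith⟩
    have h1 := hA₂ u hu' v hv' (by rw [abs_le]; constructor <;> linarith)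
      (by rw [abs_le]; constructor <;> linarith)
    rw [abs_le, abs_of_nonneg (by linarith : (0:ℝ) ≤ v - u)] at h1
    have h2 : m * (v - u) ≤ R * (v - u) := mul_le_mul_of_nonneg_right hmR (by linarith)
    have h3 : R * (v - u) ≤ M * (v - u) := mul_le_mul_of_nonneg_right hRM (by linarith)
    constructor <;> nlinarith
  intro u v hu huv hv
  rcases le_total v ybar with h | h
  · exact hleft u v hu huv h
  rcases le_total ybar u with h' | h'
  · exact hright u v h' huv hv
  · have e1 := hleft u ybar hu h' le_rfl
    have e2 := hright ybar v le_rfl h hv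
    constructor <;> [linarith [e1.1, e2.1]; linarith [e1.2, e2.2]]

/-- For a continuous, piecewise continuously differentiable `φ : ℝ → ℝ`,
mollifications `φₙ = ρₙ * φ` with standard mollifiers supported in `(-εₙ, εₙ)`, `εₙ → 0`,
and any sequence `yₙ → ȳ`, the limsup of `φₙ'(yₙ)` is at most the max of the one-sided
derivatives of `φ` at `ȳ`, and the liminf is at least their min. -/
theorem stmt_0
    (φ : ℝ → ℝ) (hφ : Continuous φ)
    (k : ℕ) (ys : Fin (k + 1) → ℝ) (hys : StrictMono ys)
    (h_left : ContDiffOn ℝ 1 φ (Set.Iic (ys 0)))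
    (h_right : ContDiffOn ℝ 1 φ (Set.Ici (ys (Fin.last k))))
    (h_mid : ∀ j : Fin k, ContDiffOn ℝ 1 φ (Set.Icc (ys j.castSucc) (ys j.succ)))
    (ε : ℕ → ℝ) (hεpos : ∀ n, 0 < ε n) (hε0 : Tendsto ε atTop (nhds 0))
    (ρ : ℕ → ℝ → ℝ) (hρ_smooth : ∀ n, ContDiff ℝ (⊤ : ℕ∞) (ρ n))
    (hρ_nonneg : ∀ n t, 0 ≤ ρ n t)
    (hρ_supp : ∀ n, Function.support (ρ n) ⊆ Set.Ioo (-(ε n)) (ε n))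
    (hρ_int : ∀ n, ∫ t, ρ n t = 1)
    (φn : ℕ → ℝ → ℝ) (hφn : ∀ n y, φn n y = ∫ z, ρ n (y - z) * φ z)
    (yn : ℕ → ℝ) (ybar : ℝ) (hyn : Tendsto yn atTop (nhds ybar)) :
    limsup (fun n => deriv (φn n) (yn n)) atTop
        ≤ max (derivWithin φ (Set.Iic ybar) ybar) (derivWithin φ (Set.Ici ybar) ybar) ∧
    min (derivWithin φ (Set.Iic ybar) ybar) (derivWithin φ (Set.Ici ybar) ybar)
        ≤ liminf (fun n => deriv (φn n) (yn n)) atTop := by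
  set L := derivWithin φ (Set.Iic ybar) ybar with hLdef
  set R := derivWithin φ (Set.Ici ybar) ybar with hRdef
  set m := min L R with hmdef
  set M := max L R with hMdef
  set u : ℕ → ℝ := fun n => deriv (φn n) (yn n) with hudef
  -- compact support of mollifiers
  have hcρ : ∀ n, HasCompactSupport (ρ n) := by
    intro n
    have h1 : tsupport (ρ n) ⊆ Set.Icc (-(ε n)) (ε n) :=
      closure_minimal ((hρ_supp n).trans Set.Ioo_subset_Icc_self) isClosed_Icc
    exact IsCompact.of_isClosed_subset isCompact_Icc (isClosed_tsupport _) h1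
  have hρcont : ∀ n, Continuous (ρ n) := fun n => (hρ_smooth n).continuous
  -- representation φn n y = ∫ t, ρ n t * φ (y - t)
  have hrep : ∀ n y, φn n y = ∫ t, ρ n t * φ (y - t) := by
    intro n y
    rw [hφn]
    have := MeasureTheory.integral_sub_left_eq_self (fun z => ρ n (y - z) * φ z)
      (volume : Measure ℝ) y
    simp only [sub_sub_cancel] at this
    exact this.symm
  -- integrability
  have hint : ∀ n y, Integrable (fun t => ρ n t * φ (y - t)) := by
    intro n y
    have hc : Continuous (fun t => ρ n t * φ (y - t)) :=
      (hρcont n).mul (hφ.comp (continuous_const.sub continuous_id))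
    exact hc.integrable_of_hasCompactSupport ((hcρ n).mul_right)
  have hρint : ∀ n, Integrable (ρ n) := fun n =>
    (hρcont n).integrable_of_hasCompactSupport (hcρ n)
  -- differentiability of φn
  have hder : ∀ n y, HasDerivAt (φn n)
      ((φ ⋆[ContinuousLinearMap.mul ℝ ℝ, volume] deriv (ρ n)) y) y := by
    intro n y
    have heq : φn n = (φ ⋆[ContinuousLinearMap.mul ℝ ℝ, volume] ρ n) := by
      funext z
      rw [hφn, convolution_def]
      simp only [ContinuousLinearMap.mul_apply']
      congr 1
      ext t
      ring_nf
    rw [heq]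
    exact HasCompactSupport.hasDerivAt_convolution_right
      (ContinuousLinearMap.mul ℝ ℝ) (hφ.locallyIntegrable) (hcρ n)
      ((hρ_smooth n).of_le (by simp)) y
  -- key: eventual two-sided bound on the derivatives
  have key : ∀ δ : ℝ, 0 < δ → ∀ᶠ n in atTop, u n ∈ Set.Icc (m - δ) (M + δ) := by
    intro δ hδ
    obtain ⟨a, ha, hφa⟩ := lemB_left h_left h_right h_mid ybar
    obtain ⟨b, hb, hφb⟩ := lemB_right h_left h_right h_mid ybar
    obtain ⟨r, hr, hC⟩ := lemC ha hb hφa hφb hδ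
    have hεev : ∀ᶠ n in atTop, ε n ≤ r / 2 := by
      filter_upwards [Metric.tendsto_nhds.mp hε0 (r / 2) (by positivity)] with n hn
      rw [Real.dist_eq, sub_zero, abs_of_pos (hεpos n)] at hn
      linarith
    have hyev : ∀ᶠ n in atTop, |yn n - ybar| < r / 4 := by
      filter_upwards [Metric.tendsto_nhds.mp hyn (r / 4) (by positivity)] with n hn
      rwa [Real.dist_eq] at hn
    filter_upwards [hεev, hyev] with n hεn hyn'
    rw [abs_lt] at hyn'
    -- increment bound for the mollified function
    have D : ∀ p q, ybar - r / 2 ≤ p → p ≤ q → q ≤ ybar + r / 2 →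
        (m - δ) * (q - p) ≤ φn n q - φn n p ∧ φn n q - φn n p ≤ (M + δ) * (q - p) := by
      intro p q hp hpq hq
      have hintsub : Integrable (fun t => ρ n t * (φ (q - t) - φ (p - t))) := by
        refine ((hint n q).sub (hint n p)).congr (Eventually.of_forall fun t => ?_)
        show ρ n t * φ (q - t) - ρ n t * φ (p - t) = _
        ring
      have hdiffeq : φn n q - φn n p = ∫ t, ρ n t * (φ (q - t) - φ (p - t)) := by
        rw [hrep n q, hrep n p, ← integral_sub (hint n q) (hint n p)]
        congr 1
        ext t
        ring
      have hbnd : ∀ t, (m - δ) * (q - p) * ρ n t ≤ ρ n t * (φ (q - t) - φ (p - t)) ∧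
          ρ n t * (φ (q - t) - φ (p - t)) ≤ (M + δ) * (q - p) * ρ n t := by
        intro t
        rcases eq_or_ne (ρ n t) 0 with h | h
        · simp [h]
        · have ht : t ∈ Set.Ioo (-(ε n)) (ε n) := hρ_supp n (Function.mem_support.mpr h)
          have hc := hC (p - t) (q - t) (by cases ht; linarith) (by linarith)
            (by cases ht; linarith)
          have hρt := hρ_nonneg n t
          constructor
          · calc (m - δ) * (q - p) * ρ n t = ρ n t * ((m - δ) * ((q - t) - (p - t))) := by ring
              _ ≤ ρ n t * (φ (q - t) - φ (p - t)) := mul_le_mul_of_nonneg_left hc.1 hρt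
          · calc ρ n t * (φ (q - t) - φ (p - t))
                ≤ ρ n t * ((M + δ) * ((q - t) - (p - t))) := mul_le_mul_of_nonneg_left hc.2 hρt
              _ = (M + δ) * (q - p) * ρ n t := by ring
      have hintc1 : Integrable (fun t => (m - δ) * (q - p) * ρ n t) := (hρint n).const_mul _
      have hintc2 : Integrable (fun t => (M + δ) * (q - p) * ρ n t) := (hρint n).const_mul _
      have hI1 : ∫ t, (m - δ) * (q - p) * ρ n t = (m - δ) * (q - p) := by
        rw [integral_const_mul, hρ_int n, mul_one]
      have hI2 : ∫ t, (M + δ) * (q - p) * ρ n t = (M + δ) * (q - p) := by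
        rw [integral_const_mul, hρ_int n, mul_one]
      constructor
      · rw [hdiffeq, ← hI1]
        exact integral_mono hintc1 hintsub (fun t => (hbnd t).1)
      · rw [hdiffeq, ← hI2]
        exact integral_mono hintsub hintc2 (fun t => (hbnd t).2)
    -- slope argument
    have hd : HasDerivAt (φn n) (u n) (yn n) := by
      have h1 := hder n (yn n)
      have h2 : deriv (φn n) (yn n) = _ := h1.deriv
      rw [hudef]
      simpa [h2] using h1
    have hslope : Tendsto (slope (φn n) (yn n)) (𝓝[>] (yn n)) (𝓝 (u n)) := by
      have h1 := hasDerivAt_iff_tendsto_slope.mp hd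
      exact h1.mono_left (nhdsWithin_mono _ (fun x hx =>
        Set.mem_compl_singleton_iff.mpr (ne_of_gt hx)))
    have hmemIoo : Set.Ioo (yn n) (yn n + r / 4) ∈ 𝓝[>] (yn n) :=
      Ioo_mem_nhdsGT_of_mem ⟨le_rfl, by linarith⟩
    have hevs : ∀ᶠ v in 𝓝[>] (yn n),
        slope (φn n) (yn n) v ∈ Set.Icc (m - δ) (M + δ) := by
      filter_upwards [hmemIoo] with v hv
      have hpos : 0 < v - yn n := by linarith [hv.1]
      have hD := D (yn n) v (by linarith [hyn'.1]) (le_of_lt hv.1)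
        (by linarith [hv.2, hyn'.2])
      rw [slope_def_field]
      constructor
      · rw [le_div_iff₀ hpos]
        calc (m - δ) * (v - yn n) ≤ φn n v - φn n (yn n) := hD.1
          _ = _ := by ring
      · rw [div_le_iff₀ hpos]
        calc (φn n v - φn n (yn n) : ℝ) ≤ (M + δ) * (v - yn n) := hD.2
          _ = _ := by ring
    constructor
    · exact ge_of_tendsto hslope (hevs.mono fun v hv => hv.1)
    · exact le_of_tendsto hslope (hevs.mono fun v hv => hv.2)
  -- conclude
  constructor
  · apply le_of_forall_pos_le_add
    intro δ hδ
    have hcob : IsCoboundedUnder (· ≤ ·) atTop u :=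
      isCoboundedUnder_le_of_eventually_le atTop ((key δ hδ).mono fun n h => h.1)
    exact limsup_le_of_le hcob ((key δ hδ).mono fun n h => h.2)
  · apply le_of_forall_pos_le_add
    intro δ hδ
    have hcob : IsCoboundedUnder (· ≥ ·) atTop u :=
      isCoboundedUnder_ge_of_eventually_le atTop ((key δ hδ).mono fun n h => h.2)
    have := le_liminf_of_le hcob ((key δ hδ).mono fun n h => h.1)
    linarith
end

section
/- Let Ω ⊂ ℝᵈ be open and bounded, u_a, u_b ∈ L^∞(Ω) with u_a < u_b a.e., and let C_ad = {u ∈ L^p(Ω) : u_a ≤ u ≤ u_b a.e.} for p ≥ 2. Let ū ∈ C_ad and Ω_{a,b} = {x : ū(x) = u_a(x) or ū(x) = u_b(x)}. Then the contingent cone T_{C_ad}(ū) = {h ∈ L^p(Ω) : ∃ tₙ ↓ 0, hₙ → h in L^p, ū + tₙhₙ ∈ C_ad ∀n} is dense in L²(Ω) if and only if Ω_{a,b} has Lebesgue measure zero. -/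
open MeasureTheory Filter Set Topology
open scoped ENNReal

/-! If `ū = u_a` on a set `E` of positive measure, every contingent direction is a.e. nonnegative
on `E` (the difference quotients are, and a subsequence converges a.e.), so it stays at
`L²`-distance at least `μ(E)^{1/2}` from `-𝟙_E`; the case `ū = u_b` is symmetric.
Conversely, if the active set is null, the sets where `ū` comes within `ε` of a bound shrink to a
null set as `ε → 0`. A bounded function vanishing on such a set is a feasible direction, hence a
contingent one, and cutting a bounded simple function off on a set of small measure changes it
little in `L²`. -/

section ContingentCone

variable {α : Type*} [MeasurableSpace α] {μ : Measure α} {p q : ℝ≥0∞} {ua ub ubar h : α → ℝ}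

/-- `h` lies in the contingent cone `T_{C_ad}(ubar)` of the box `C_ad = {ua ≤ u ≤ ub}`, the
difference quotients converging in `L^p(μ)`. -/
def IsContingentDirection (μ : Measure α) (p : ℝ≥0∞) (ua ub ubar h : α → ℝ) : Prop :=
  ∃ t : ℕ → ℝ, ∃ hs : ℕ → α → ℝ,
    (∀ n, 0 < t n) ∧ Tendsto t atTop (nhds 0) ∧
    Tendsto (fun n => eLpNorm (hs n - h) p μ) atTop (nhds 0) ∧
    ∀ n, MemLp (fun x => ubar x + t n * hs n x) p μ ∧
      ∀ᵐ x ∂μ, ua x ≤ ubar x + t n * hs n x ∧ ubar x + t n * hs n x ≤ ub x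

def contingentCone (μ : Measure α) (p : ℝ≥0∞) (ua ub ubar : α → ℝ) : Set (α → ℝ) :=
  {h | MemLp h p μ ∧ IsContingentDirection μ p ua ub ubar h}

def IsLpDense (μ : Measure α) (q : ℝ≥0∞) (S : Set (α → ℝ)) : Prop :=
  ∀ g : α → ℝ, MemLp g q μ → ∀ δ : ℝ, 0 < δ → ∃ h ∈ S, eLpNorm (h - g) q μ < ENNReal.ofReal δ

lemma IsContingentDirection.ae_sign_of_active (hp : p ≠ 0) (hubar : MemLp ubar p μ)
    (hh : AEStronglyMeasurable h μ) (hc : IsContingentDirection μ p ua ub ubar h) :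
    ∀ᵐ x ∂μ, (ubar x = ua x → 0 ≤ h x) ∧ (ubar x = ub x → h x ≤ 0) := by
  obtain ⟨t, hs, ht, -, hlim, hfeas⟩ := hc
  have hs_meas (n : ℕ) : AEStronglyMeasurable (hs n) μ := by
    have hquot : hs n = fun x => (t n)⁻¹ * ((ubar x + t n * hs n x) - ubar x) := by
      funext x
      rw [add_sub_cancel_left, inv_mul_cancel_left₀ (ht n).ne']
    rw [hquot]
    exact ((hfeas n).1.1.sub hubar.1).const_mul _
  obtain ⟨ns, -, hae⟩ :=
    (tendstoInMeasure_of_tendsto_eLpNorm hp hs_meas hh hlim).exists_seq_tendsto_ae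
  filter_upwards [hae, ae_all_iff.2 fun n => (hfeas n).2] with x hx hbox
  refine ⟨fun hxa => ge_of_tendsto' hx fun i => ?_, fun hxb => le_of_tendsto' hx fun i => ?_⟩
  · have hle := (hbox (ns i)).1
    rw [hxa] at hle
    exact (mul_nonneg_iff_of_pos_left (ht _)).1 (by linarith)
  · have hle := (hbox (ns i)).2
    rw [hxb] at hle
    exact nonpos_of_mul_nonpos_left (by linarith) (ht _)

lemma measure_eq_zero_of_isLpDense_nonneg_on [IsFiniteMeasure μ] (hq : q ≠ 0) (hq_top : q ≠ ∞)
    {E : Set α} (hE : NullMeasurableSet E μ)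
    (hdense : IsLpDense μ q {h | ∀ᵐ x ∂μ, x ∈ E → 0 ≤ h x}) : μ E = 0 := by
  by_contra hE0
  set r := μ E ^ (1 / q.toReal)
  have hr : 0 < r := ENNReal.rpow_pos (pos_iff_ne_zero.2 hE0) (measure_ne_top _ _)
  have hr_top : r ≠ ∞ := ENNReal.rpow_ne_top_of_nonneg (by positivity) (measure_ne_top _ _)
  have hg : MemLp (E.indicator fun _ => (-1 : ℝ)) q μ := by
    refine MemLp.of_bound (aestronglyMeasurable_const.indicator₀ hE) 1 (ae_of_all _ fun x => ?_)
    by_cases hx : x ∈ E <;> simp [hx]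
  obtain ⟨h, hh : ∀ᵐ x ∂μ, x ∈ E → 0 ≤ h x, hclose⟩ := hdense _ hg r.toReal (ENNReal.toReal_pos hr.ne' hr_top)
  have hdist : r ≤ eLpNorm (h - E.indicator fun _ => (-1 : ℝ)) q μ := by
    have hone : eLpNorm (E.indicator fun _ => (1 : ℝ)) q μ = r := by
      simp [eLpNorm_indicator_const₀ hE hq hq_top, r]
    rw [← hone]
    refine eLpNorm_mono_ae (hh.mono fun x hx => ?_)
    by_cases hxE : x ∈ E
    · have := hx hxE
      simp only [indicator_of_mem hxE, Pi.sub_apply, norm_one, Real.norm_eq_abs]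
      rw [abs_of_nonneg (by linarith)]
      linarith
    · simp [hxE]
  rw [ENNReal.ofReal_toReal hr_top] at hclose
  exact (hdist.trans_lt hclose).false

lemma measure_active_eq_zero_of_isLpDense [IsFiniteMeasure μ] (hp : p ≠ 0) (hq : q ≠ 0)
    (hq_top : q ≠ ∞) (hua : AEStronglyMeasurable ua μ) (hub : AEStronglyMeasurable ub μ)
    (hubar : MemLp ubar p μ) (hdense : IsLpDense μ q (contingentCone μ p ua ub ubar)) :
    μ {x | ubar x = ua x ∨ ubar x = ub x} = 0 := by
  refine measure_union_null ?_ ?_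
  · refine measure_eq_zero_of_isLpDense_nonneg_on hq hq_top (hubar.1.nullMeasurableSet_eq_fun hua)
      fun g hg δ hδ => ?_
    obtain ⟨h, ⟨hh, hc⟩, hclose⟩ := hdense g hg δ hδ
    exact ⟨h, (hc.ae_sign_of_active hp hubar hh.1).mono fun x hx => hx.1, hclose⟩
  · refine measure_eq_zero_of_isLpDense_nonneg_on hq hq_top (hubar.1.nullMeasurableSet_eq_fun hub)
      fun g hg δ hδ => ?_
    obtain ⟨h, ⟨hh, hc⟩, hclose⟩ := hdense (-g) hg.neg δ hδ
    refine ⟨-h, (hc.ae_sign_of_active hp hubar hh.1).mono fun x hx hxb => neg_nonneg.2 (hx.2 hxb),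
      ?_⟩
    rwa [← eLpNorm_neg, neg_sub, sub_neg_eq_add, add_comm, ← sub_neg_eq_add]

lemma IsContingentDirection.of_feasible (hubar : MemLp ubar p μ) (hh : MemLp h p μ) {τ : ℝ}
    (hτ : 0 < τ) (hbox : ∀ᵐ x ∂μ, ubar x ∈ Icc (ua x) (ub x))
    (hstep : ∀ᵐ x ∂μ, ubar x + τ * h x ∈ Icc (ua x) (ub x)) :
    IsContingentDirection μ p ua ub ubar h := by
  refine ⟨fun n => τ * (1 / (n + 1)), fun _ => h, fun n => by positivity, ?_, by simp,
    fun n => ⟨hubar.add (hh.const_mul _), ?_⟩⟩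
  · simpa using tendsto_one_div_add_atTop_nhds_zero_nat.const_mul τ
  · filter_upwards [hbox, hstep] with x hx hxτ
    have hmem := (convex_Icc (ua x) (ub x)).add_smul_mem hx hxτ
      (t := 1 / ((n : ℝ) + 1)) ⟨by positivity, by rw [div_le_one (by positivity)]; simp⟩
    rw [smul_eq_mul, mul_left_comm, ← mul_assoc] at hmem
    exact hmem

lemma indicator_compl_mem_contingentCone [IsFiniteMeasure μ] (hubar : MemLp ubar p μ)
    (hbox : ∀ᵐ x ∂μ, ubar x ∈ Icc (ua x) (ub x)) {s : α → ℝ} (hs : AEStronglyMeasurable s μ)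
    {M : ℝ} (hM : 0 < M) (hsM : ∀ x, ‖s x‖ ≤ M) {T : Set α} (hT : MeasurableSet T) {ε : ℝ}
    (hε : 0 < ε) (hslack : ∀ x ∉ T, ua x + ε ≤ ubar x ∧ ubar x ≤ ub x - ε) :
    Tᶜ.indicator s ∈ contingentCone μ p ua ub ubar := by
  have hmem : MemLp (Tᶜ.indicator s) p μ :=
    (MemLp.of_bound hs M (ae_of_all _ hsM)).indicator hT.compl
  refine ⟨hmem, .of_feasible hubar hmem (div_pos hε hM) hbox ?_⟩
  filter_upwards [hbox] with x hx
  by_cases hxT : x ∈ T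
  · simpa [hxT] using hx
  · have hsmall : |ε / M * s x| ≤ ε := by
      rw [abs_mul, abs_of_pos (div_pos hε hM), ← Real.norm_eq_abs]
      calc ε / M * ‖s x‖ ≤ ε / M * M := by gcongr; exact hsM x
        _ = ε := div_mul_cancel₀ ε hM.ne'
    rw [indicator_of_mem (mem_compl hxT)]
    obtain ⟨hlow, hup⟩ := hslack x hxT
    constructor <;> linarith [abs_le.1 hsmall]

lemma exists_pos_measure_setOf_le_lt [IsFiniteMeasure μ] {φ : α → ℝ} (hφ : AEMeasurable φ μ)
    (hpos : ∀ᵐ x ∂μ, 0 < φ x) {η : ℝ≥0∞} (hη : 0 < η) : ∃ ε > 0, μ {x | φ x ≤ ε} < η := by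
  set B : ℕ → Set α := fun n => {x | φ x ≤ 1 / (n + 1)}
  have hlim : Tendsto (μ ∘ B) atTop (𝓝 (μ (⋂ n, B n))) :=
    tendsto_measure_iInter_atTop (fun n => nullMeasurableSet_le hφ aemeasurable_const)
      (fun m n hmn x hx => le_trans (b := 1 / ((n : ℝ) + 1)) hx (Nat.one_div_le_one_div hmn)) ⟨0, measure_ne_top _ _⟩
  have hnull : μ (⋂ n, B n) = 0 := by
    refine measure_mono_null (fun x hx => ?_) (ae_iff.1 hpos)
    intro hφx
    obtain ⟨n, hn⟩ := exists_nat_one_div_lt hφx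
    exact (mem_iInter.1 hx n).not_gt hn
  rw [hnull] at hlim
  obtain ⟨n, hn⟩ := (hlim.eventually (gt_mem_nhds hη)).exists
  exact ⟨1 / (n + 1), by positivity, hn⟩

lemma isLpDense_contingentCone_of_measure_active_eq_zero [IsFiniteMeasure μ] (hq : 1 ≤ q)
    (hq_top : q ≠ ∞) (hua : AEMeasurable ua μ) (hub : AEMeasurable ub μ) (hubar : MemLp ubar p μ)
    (hbox : ∀ᵐ x ∂μ, ubar x ∈ Icc (ua x) (ub x))
    (hactive : μ {x | ubar x = ua x ∨ ubar x = ub x} = 0) :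
    IsLpDense μ q (contingentCone μ p ua ub ubar) := by
  intro g hg δ hδ
  obtain ⟨s, hgs, hs⟩ :=
    hg.exists_simpleFunc_eLpNorm_sub_lt hq_top (ENNReal.ofReal_pos.2 (half_pos hδ)).ne'
  obtain ⟨C, hC⟩ := s.exists_forall_norm_le
  obtain ⟨η, hη, hsmall⟩ := hs.eLpNorm_indicator_le hq hq_top (half_pos hδ)
  set φ : α → ℝ := fun x => min (ubar x - ua x) (ub x - ubar x)
  have hφ_pos : ∀ᵐ x ∂μ, 0 < φ x := by
    filter_upwards [hbox, measure_eq_zero_iff_ae_notMem.1 hactive] with x hx hxA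
    simp only [not_or] at hxA
    exact lt_min (sub_pos.2 (hx.1.lt_of_ne' hxA.1)) (sub_pos.2 (hx.2.lt_of_ne hxA.2))
  obtain ⟨ε, hε, hμε⟩ := exists_pos_measure_setOf_le_lt
    ((hubar.1.aemeasurable.sub hua).min (hub.sub hubar.1.aemeasurable)) hφ_pos
    (ENNReal.ofReal_pos.2 hη)
  set T := toMeasurable μ {x | φ x ≤ ε}
  have hT : MeasurableSet T := measurableSet_toMeasurable _ _
  refine ⟨Tᶜ.indicator s, indicator_compl_mem_contingentCone hubar hbox s.aestronglyMeasurable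
    (lt_max_of_lt_right one_pos) (fun x => (hC x).trans (le_max_left _ _)) hT hε
    fun x hx => ?_, ?_⟩
  · have hlt : ε < φ x := not_le.1 fun hle => hx (subset_toMeasurable _ _ hle)
    constructor <;> linarith [min_le_left (ubar x - ua x) (ub x - ubar x),
      min_le_right (ubar x - ua x) (ub x - ubar x)]
  · have hcut : eLpNorm (T.indicator s) q μ ≤ ENNReal.ofReal (δ / 2) :=
      hsmall T hT (by rw [measure_toMeasurable]; exact hμε.le)
    calc eLpNorm (Tᶜ.indicator s - g) q μ = eLpNorm ((⇑s - g) - T.indicator s) q μ := by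
          rw [indicator_compl, sub_sub, add_comm, ← sub_sub]
      _ ≤ eLpNorm (⇑s - g) q μ + eLpNorm (T.indicator s) q μ :=
          eLpNorm_sub_le (s.aestronglyMeasurable.sub hg.1)
            (s.aestronglyMeasurable.indicator hT) hq
      _ < ENNReal.ofReal (δ / 2) + ENNReal.ofReal (δ / 2) := by
          rw [eLpNorm_sub_comm]
          exact ENNReal.add_lt_add_of_lt_of_le (hcut.trans_lt ENNReal.ofReal_lt_top).ne hgs hcut
      _ = ENNReal.ofReal δ := by
          rw [← ENNReal.ofReal_add (by positivity) (by positivity), add_halves]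

theorem isLpDense_contingentCone_iff [IsFiniteMeasure μ] (hp : p ≠ 0) (hq : 1 ≤ q)
    (hq_top : q ≠ ∞) (hua : AEStronglyMeasurable ua μ) (hub : AEStronglyMeasurable ub μ)
    (hubar : MemLp ubar p μ) (hbox : ∀ᵐ x ∂μ, ubar x ∈ Icc (ua x) (ub x)) :
    IsLpDense μ q (contingentCone μ p ua ub ubar) ↔
      μ {x | ubar x = ua x ∨ ubar x = ub x} = 0 :=
  ⟨measure_active_eq_zero_of_isLpDense hp (zero_lt_one.trans_le hq).ne' hq_top hua hub hubar,
    isLpDense_contingentCone_of_measure_active_eq_zero hq hq_top hua.aemeasurable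
      hub.aemeasurable hubar hbox⟩

end ContingentCone

theorem stmt_14_general {d : ℕ}
    (Ω : Set (Fin d → ℝ)) (hΩb : Bornology.IsBounded Ω)
    (μ : Measure (Fin d → ℝ)) (hμ : μ = volume.restrict Ω)
    (p : ℝ) (hp : 2 ≤ p)
    (ua ub ubar : (Fin d → ℝ) → ℝ)
    (hua : MemLp ua ⊤ μ) (hub : MemLp ub ⊤ μ)
    (hubar_mem : MemLp ubar (ENNReal.ofReal p) μ)
    (hubar_box : ∀ᵐ x ∂μ, ua x ≤ ubar x ∧ ubar x ≤ ub x) :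
    -- the contingent cone T_{C_ad}(ū) (as a set of L^p functions) is dense in L²(Ω) ...
    ((∀ g : (Fin d → ℝ) → ℝ, MemLp g 2 μ → ∀ δ : ℝ, 0 < δ →
        ∃ h : (Fin d → ℝ) → ℝ,
          (MemLp h (ENNReal.ofReal p) μ ∧
            ∃ t : ℕ → ℝ, ∃ hs : ℕ → (Fin d → ℝ) → ℝ,
              (∀ n, 0 < t n) ∧ Tendsto t atTop (nhds 0) ∧
              Tendsto (fun n => eLpNorm (hs n - h) (ENNReal.ofReal p) μ) atTop (nhds 0) ∧
              ∀ n, MemLp (fun x => ubar x + t n * hs n x) (ENNReal.ofReal p) μ ∧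
                ∀ᵐ x ∂μ, ua x ≤ ubar x + t n * hs n x ∧ ubar x + t n * hs n x ≤ ub x) ∧
          eLpNorm (h - g) 2 μ < ENNReal.ofReal δ)
    -- ... if and only if the active set has Lebesgue measure zero
    ↔ μ {x | ubar x = ua x ∨ ubar x = ub x} = 0) := by
  subst hμ
  have := isFiniteMeasure_restrict.2 (hΩb.measure_lt_top (μ := volume)).ne
  exact isLpDense_contingentCone_iff (ENNReal.ofReal_pos.2 (by linarith)).ne' one_le_two
    ENNReal.ofNat_ne_top hua.1 hub.1 hubar_mem hubar_box

/-- For the box-constraint set `C_ad = {u ∈ L^p(Ω) : u_a ≤ u ≤ u_b a.e.}`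
with `u_a, u_b ∈ L^∞(Ω)`, `u_a < u_b` a.e., and `ū ∈ C_ad`, the contingent cone
`T_{C_ad}(ū)` is dense in `L²(Ω)` if and only if the active set
`Ω_{a,b} = {x : ū(x) = u_a(x) or ū(x) = u_b(x)}` has measure zero. -/
theorem stmt_14 {d : ℕ}
    (Ω : Set (Fin d → ℝ)) (hΩo : IsOpen Ω) (hΩb : Bornology.IsBounded Ω)
    (μ : Measure (Fin d → ℝ)) (hμ : μ = volume.restrict Ω)
    (p : ℝ) (hp : 2 ≤ p)
    (ua ub ubar : (Fin d → ℝ) → ℝ)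
    (hua : MemLp ua ⊤ μ) (hub : MemLp ub ⊤ μ)
    (hab : ∀ᵐ x ∂μ, ua x < ub x)
    (hubar_mem : MemLp ubar (ENNReal.ofReal p) μ)
    (hubar_box : ∀ᵐ x ∂μ, ua x ≤ ubar x ∧ ubar x ≤ ub x) :
    -- the contingent cone T_{C_ad}(ū) (as a set of L^p functions) is dense in L²(Ω) ...
    ((∀ g : (Fin d → ℝ) → ℝ, MemLp g 2 μ → ∀ δ : ℝ, 0 < δ →
        ∃ h : (Fin d → ℝ) → ℝ,
          (MemLp h (ENNReal.ofReal p) μ ∧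
            ∃ t : ℕ → ℝ, ∃ hs : ℕ → (Fin d → ℝ) → ℝ,
              (∀ n, 0 < t n) ∧ Tendsto t atTop (nhds 0) ∧
              Tendsto (fun n => eLpNorm (hs n - h) (ENNReal.ofReal p) μ) atTop (nhds 0) ∧
              ∀ n, MemLp (fun x => ubar x + t n * hs n x) (ENNReal.ofReal p) μ ∧
                ∀ᵐ x ∂μ, ua x ≤ ubar x + t n * hs n x ∧ ubar x + t n * hs n x ≤ ub x) ∧
          eLpNorm (h - g) 2 μ < ENNReal.ofReal δ)
    -- ... if and only if the active set has Lebesgue measure zero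
    ↔ μ {x | ubar x = ua x ∨ ubar x = ub x} = 0) :=
  stmt_14_general Ω hΩb μ hμ p hp ua ub ubar hua hub hubar_mem hubar_box
end
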